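/- Let {e_i : i ∈ I} be idempotents in R with Σ_{i∈I} e_iR essential in R as a right R-module. Let J ⊆ I and f an idempotent with Σ_{j∈J} e_jR ⊆ fR and f·e_i = 0 for all i ∈ I∖J. If additionally the sum Σ_{i∈I} e_iR is such that each element of it is a finite sum Σ e_i r_i, then Σ_{j∈J} e_jR is essential in fR. -/
import Mathlib


/-- The cyclic right ideal `aR`, as a submodule of `R` over `Rᵐᵒᵖ`. -/
def rspan (R : Type*) [Ring R] (a : R) : Submodule Rᵐᵒᵖ R := Submodule.span Rᵐᵒᵖ {a}

lemma mem_rspan_iff {R : Type*} [Ring R] {a x : R} :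
    x ∈ rspan R a ↔ ∃ r : R, x = a * r := by
  rw [rspan, Submodule.mem_span_singleton]
  constructor
  · rintro ⟨r, rfl⟩
    exact ⟨r.unop, by simp [MulOpposite.smul_eq_mul_unop]⟩
  · rintro ⟨r, rfl⟩
    exact ⟨MulOpposite.op r, by simp [MulOpposite.smul_eq_mul_unop]⟩

lemma idem_mul_of_mem_rspan {R : Type*} [Ring R] {f x : R} (hf : IsIdempotentElem f)
    (hx : x ∈ rspan R f) : f * x = x := by
  obtain ⟨r, rfl⟩ := mem_rspan_iff.mp hx
  rw [← mul_assoc, hf]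

/-- Let `{eᵢ : i ∈ I}` be idempotents with `Σᵢ eᵢR` essential in `R` as a right module,
`J ⊆ I` and `f` an idempotent with `Σ_{j∈J} eⱼR ⊆ fR` and `f·eᵢ = 0` for `i ∉ J`.
Then `Σ_{j∈J} eⱼR` is essential in `fR`. -/
theorem essential_in_fR {R ι : Type*} [Ring R] (e : ι → R)
    (hidem : ∀ i, IsIdempotentElem (e i))
    (hess : ∀ L : Submodule Rᵐᵒᵖ R, L ≠ ⊥ → (⨆ i, rspan R (e i)) ⊓ L ≠ ⊥)
    (J : Set ι) (f : R) (hf : IsIdempotentElem f)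
    (hle : (⨆ j : J, rspan R (e j)) ≤ rspan R f)
    (horth : ∀ i, i ∉ J → f * e i = 0) :
    ∀ L : Submodule Rᵐᵒᵖ R, L ≤ rspan R f → L ≠ ⊥ →
      (⨆ j : J, rspan R (e j)) ⊓ L ≠ ⊥ := by
  classical
  intro L hL hLne
  obtain ⟨x, hx, hxne⟩ := Submodule.ne_bot_iff _ |>.mp (hess L hLne)
  obtain ⟨hx1, hx2⟩ := Submodule.mem_inf.mp hx
  rw [Submodule.ne_bot_iff]
  -- x ∈ L ≤ fR, so f * x = x
  have hfx : f * x = x := idem_mul_of_mem_rspan hf (hL hx2)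
  obtain ⟨c, hc, hcs⟩ := (Submodule.mem_iSup_iff_exists_finsupp _ x).mp hx1
  -- x = f * x = sum over support of f * c i = sum over i ∈ J of c i
  have key : x ∈ ⨆ j : J, rspan R (e j) := by
    have : x = c.sum fun i xi => f * xi := by
      rw [← hfx]
      rw [← hcs, Finsupp.sum, Finsupp.sum, Finset.mul_sum]
    rw [this]
    refine Submodule.sum_mem _ fun i hi => ?_
    show f * c i ∈ _
    by_cases hiJ : i ∈ J
    · have hci : c i ∈ ⨆ j : J, rspan R (e j) :=
        Submodule.mem_iSup_of_mem (⟨i, hiJ⟩ : J) (hc i)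
      rw [idem_mul_of_mem_rspan hf (hle hci)]
      exact hci
    · obtain ⟨r, hr⟩ := mem_rspan_iff.mp (hc i)
      rw [hr, ← mul_assoc, horth i hiJ, zero_mul]
      exact Submodule.zero_mem _
  exact ⟨x, Submodule.mem_inf.mpr ⟨key, hx2⟩, hxne⟩
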